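/- Let $B \in \mathbb{R}^{n\times n}$ be an invertible lower-triangular matrix with unit diagonal, and let $D, W \in \mathbb{R}^{n\times n}$ be diagonal matrices with strictly positive diagonal entries $D_i$ and $W_{ii}$. Define $\tilde\Sigma = B^{-1} D B^{-T}$, $\tilde\Sigma^{-1} = B^T D^{-1} B$, and the VADU-preconditioned matrix $M = P^{-1/2}(W + \tilde\Sigma^{-1})P^{-T/2}$ with $P^{1/2} = B^T(W+D^{-1})^{1/2}$. Then the condition number of $M$ is bounded as $\frac{\lambda_1(M)}{\lambda_n(M)} \le \frac{(\lambda_1(\tilde\Sigma)\max_i(W_{ii}) + 1)\,\max_i((D_i W_{ii}+1)^{-1})}{(\lambda_n(\tilde\Sigma)\min_i(W_{ii}) + 1)\,\min_i((D_i W_{ii}+1)^{-1})}$. -/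

import Mathlib

/-!
Substituting `x = P^{T/2} z` and `y = B z`, the Rayleigh quotient of `M` becomes
`(zᵀ W z + zᵀ Σ̃⁻¹ z) / ∑ᵢ (Wᵢᵢ + Dᵢ⁻¹) yᵢ²` with `zᵀ Σ̃⁻¹ z = ∑ᵢ Dᵢ⁻¹ yᵢ²`.
Since `|z|²` lies between `λₙ(Σ̃) zᵀ Σ̃⁻¹ z` and `λ₁(Σ̃) zᵀ Σ̃⁻¹ z`, the numerator lies between
`(λₙ(Σ̃) minᵢ Wᵢᵢ + 1) zᵀ Σ̃⁻¹ z` and `(λ₁(Σ̃) maxᵢ Wᵢᵢ + 1) zᵀ Σ̃⁻¹ z`; and termwise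
`Dᵢ⁻¹ = (DᵢWᵢᵢ + 1)⁻¹ (Wᵢᵢ + Dᵢ⁻¹)`, so `zᵀ Σ̃⁻¹ z` lies between `minᵢ (DᵢWᵢᵢ + 1)⁻¹` and
`maxᵢ (DᵢWᵢᵢ + 1)⁻¹` times the denominator. Evaluating the Rayleigh quotient at eigenvectors
bounds `λ₁(M)` above and `λₙ(M)` below.
-/

open Matrix Polynomial
open scoped MatrixOrder

theorem sum_mul_le_ciSup_mul_sum {ι : Type*} [Fintype ι] (c b : ι → ℝ) (hb : ∀ i, 0 ≤ b i) :
    ∑ i, c i * b i ≤ (⨆ i, c i) * ∑ i, b i := by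
  rw [Finset.mul_sum]
  exact Finset.sum_le_sum fun i _ =>
    mul_le_mul_of_nonneg_right (le_ciSup (Finite.bddAbove_range c) i) (hb i)

theorem ciInf_mul_sum_le_sum_mul {ι : Type*} [Fintype ι] (c b : ι → ℝ) (hb : ∀ i, 0 ≤ b i) :
    (⨅ i, c i) * ∑ i, b i ≤ ∑ i, c i * b i := by
  rw [Finset.mul_sum]
  exact Finset.sum_le_sum fun i _ =>
    mul_le_mul_of_nonneg_right (ciInf_le (Finite.bddBelow_range c) i) (hb i)

theorem Finite.ciInf_pos {ι : Type*} [Finite ι] [Nonempty ι] {f : ι → ℝ} (hf : ∀ i, 0 < f i) :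
    0 < ⨅ i, f i := by
  obtain ⟨i, hi⟩ := exists_eq_ciInf_of_finite (f := f)
  exact hi ▸ hf i

namespace Matrix

variable {ι : Type*} [Fintype ι]

theorem dotProduct_transpose_mul_mul_mulVec (A B : Matrix ι ι ℝ) (z : ι → ℝ) :
    z ⬝ᵥ ((Bᵀ * A * B) *ᵥ z) = (B *ᵥ z) ⬝ᵥ (A *ᵥ (B *ᵥ z)) := by
  rw [← mulVec_mulVec, ← mulVec_mulVec, dotProduct_mulVec, vecMul_transpose]

variable [DecidableEq ι]

theorem dotProduct_diagonal_mulVec (c v : ι → ℝ) :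
    v ⬝ᵥ (diagonal c *ᵥ v) = ∑ i, c i * v i ^ 2 := by
  simp only [dotProduct, mulVec_diagonal]
  exact Finset.sum_congr rfl fun i _ => by ring

theorem diagonal_mulVec_dotProduct_self (c v : ι → ℝ) :
    (diagonal c *ᵥ v) ⬝ᵥ (diagonal c *ᵥ v) = ∑ i, c i ^ 2 * v i ^ 2 := by
  simp only [dotProduct, mulVec_diagonal]
  exact Finset.sum_congr rfl fun i _ => by ring

theorem dotProduct_inv_mul_mul_inv_transpose_mulVec {P : Matrix ι ι ℝ} (hP : IsUnit P.det)
    (A : Matrix ι ι ℝ) (z : ι → ℝ) :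
    (Pᵀ *ᵥ z) ⬝ᵥ ((P⁻¹ * A * P⁻¹ᵀ) *ᵥ (Pᵀ *ᵥ z)) = z ⬝ᵥ (A *ᵥ z) := by
  have hz : P⁻¹ᵀ *ᵥ (Pᵀ *ᵥ z) = z := by
    rw [mulVec_mulVec, ← transpose_mul, mul_nonsing_inv _ hP, transpose_one, one_mulVec]
  rw [← mulVec_mulVec, ← mulVec_mulVec, hz, dotProduct_mulVec, ← mulVec_transpose, hz]

theorem inv_mul_mul_inv_transpose_inv {B : Matrix ι ι ℝ} (hB : IsUnit B.det) (A : Matrix ι ι ℝ) :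
    (B⁻¹ * A * B⁻¹ᵀ)⁻¹ = Bᵀ * A⁻¹ * B := by
  rw [Matrix.mul_inv_rev, Matrix.mul_inv_rev, transpose_nonsing_inv,
    nonsing_inv_nonsing_inv _ (det_transpose B ▸ hB), nonsing_inv_nonsing_inv _ hB, mul_assoc]

theorem PosDef.inv_mul_mul_inv_transpose {A B : Matrix ι ι ℝ} (hA : A.PosDef)
    (hB : IsUnit B.det) : (B⁻¹ * A * B⁻¹ᵀ).PosDef := by
  simpa using hA.mul_mul_conjTranspose_same
    (vecMul_injective_iff_isUnit.mpr ((isUnit_iff_isUnit_det _).mpr (isUnit_nonsing_inv_det B hB)))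

theorem exists_mulVec_eq_smul_of_mem_spectrum {K : Type*} [Field K] {A : Matrix ι ι K} {t : K}
    (ht : t ∈ spectrum K A) : ∃ v ≠ 0, A *ᵥ v = t • v := by
  rw [← spectrum_toLin', ← Module.End.hasEigenvalue_iff_mem_spectrum] at ht
  obtain ⟨hv, hne⟩ := ht.exists_hasEigenvector.choose_spec
  exact ⟨_, hne, by simpa using hv⟩

theorem mem_spectrum_iff_of_charpoly_eq_prod {K : Type*} [Field K] {A : Matrix ι ι K}
    {μ : ι → K} (hA : A.charpoly = ∏ i, (X - C (μ i))) {t : K} :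
    t ∈ spectrum K A ↔ t ∈ Set.range μ := by
  rw [mem_spectrum_iff_isRoot_charpoly, hA, IsRoot.def, eval_prod]
  simp only [eval_sub, eval_X, eval_C, Finset.prod_eq_zero_iff,
    Finset.mem_univ, true_and, sub_eq_zero, Set.mem_range]
  exact exists_congr fun _ => eq_comm

theorem le_of_mem_spectrum_of_forall_dotProduct_mulVec_le {A : Matrix ι ι ℝ} {c t : ℝ}
    (hA : ∀ v, v ⬝ᵥ (A *ᵥ v) ≤ c * (v ⬝ᵥ v)) (ht : t ∈ spectrum ℝ A) : t ≤ c := by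
  obtain ⟨v, hv, hAv⟩ := exists_mulVec_eq_smul_of_mem_spectrum ht
  have hvv : 0 < v ⬝ᵥ v := by simpa using dotProduct_star_self_pos_iff.mpr hv
  have := hA v
  rw [hAv, dotProduct_smul, smul_eq_mul] at this
  exact le_of_mul_le_mul_right this hvv

theorem le_of_mem_spectrum_of_forall_le_dotProduct_mulVec {A : Matrix ι ι ℝ} {c t : ℝ}
    (hA : ∀ v, c * (v ⬝ᵥ v) ≤ v ⬝ᵥ (A *ᵥ v)) (ht : t ∈ spectrum ℝ A) : c ≤ t := by
  obtain ⟨v, hv, hAv⟩ := exists_mulVec_eq_smul_of_mem_spectrum ht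
  have hvv : 0 < v ⬝ᵥ v := by simpa using dotProduct_star_self_pos_iff.mpr hv
  have := hA v
  rw [hAv, dotProduct_smul, smul_eq_mul] at this
  exact le_of_mul_le_mul_right this hvv

theorem IsHermitian.mul_dotProduct_self_le_dotProduct_mulVec {S : Matrix ι ι ℝ}
    (hS : S.IsHermitian) {lo : ℝ} (h : ∀ t ∈ spectrum ℝ S, lo ≤ t) (v : ι → ℝ) :
    lo * (v ⬝ᵥ v) ≤ v ⬝ᵥ (S *ᵥ v) := by
  have hpsd : (S - algebraMap ℝ _ lo).PosSemidef := by
    refine posSemidef_iff_isHermitian_and_spectrum_nonneg.mpr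
      ⟨hS.sub (isHermitian_diagonal _), ?_⟩
    rw [← spectrum.sub_singleton_eq]
    rintro _ ⟨t, ht, _, rfl, rfl⟩
    exact sub_nonneg.mpr (h t ht)
  simpa [Algebra.algebraMap_eq_smul_one, sub_mulVec, smul_mulVec, dotProduct_sub]
    using hpsd.dotProduct_mulVec_nonneg v

theorem IsHermitian.dotProduct_mulVec_le_mul_dotProduct_self {S : Matrix ι ι ℝ}
    (hS : S.IsHermitian) {hi : ℝ} (h : ∀ t ∈ spectrum ℝ S, t ≤ hi) (v : ι → ℝ) :
    v ⬝ᵥ (S *ᵥ v) ≤ hi * (v ⬝ᵥ v) := by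
  have hpsd : (algebraMap ℝ _ hi - S).PosSemidef := by
    refine posSemidef_iff_isHermitian_and_spectrum_nonneg.mpr
      ⟨(isHermitian_diagonal _).sub hS, ?_⟩
    rw [← spectrum.singleton_sub_eq]
    rintro _ ⟨_, rfl, t, ht, rfl⟩
    exact sub_nonneg.mpr (h t ht)
  simpa [Algebra.algebraMap_eq_smul_one, sub_mulVec, smul_mulVec, dotProduct_sub]
    using hpsd.dotProduct_mulVec_nonneg v

theorem PosDef.mem_spectrum_inv_iff {S : Matrix ι ι ℝ} (hS : S.PosDef) {t : ℝ} :
    t ∈ spectrum ℝ S⁻¹ ↔ t⁻¹ ∈ spectrum ℝ S := by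
  lift S to (Matrix ι ι ℝ)ˣ using hS.isUnit
  rw [← coe_units_inv, ← spectrum.map_inv, Set.mem_inv]

theorem PosDef.dotProduct_self_le_mul_dotProduct_inv_mulVec {S : Matrix ι ι ℝ} (hS : S.PosDef)
    {hi : ℝ} (hhi : 0 < hi) (h : ∀ t ∈ spectrum ℝ S, t ≤ hi) (v : ι → ℝ) :
    v ⬝ᵥ v ≤ hi * (v ⬝ᵥ (S⁻¹ *ᵥ v)) := by
  have hinv : hi⁻¹ * (v ⬝ᵥ v) ≤ v ⬝ᵥ (S⁻¹ *ᵥ v) := by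
    refine hS.inv.isHermitian.mul_dotProduct_self_le_dotProduct_mulVec (fun t ht => ?_) v
    have htpos : 0 < t := hS.inv.isStrictlyPositive.spectrum_pos ht
    simpa using inv_anti₀ (inv_pos.mpr htpos) (h _ (hS.mem_spectrum_inv_iff.mp ht))
  rwa [inv_mul_le_iff₀ hhi] at hinv

theorem PosDef.mul_dotProduct_inv_mulVec_le_dotProduct_self {S : Matrix ι ι ℝ} (hS : S.PosDef)
    {lo : ℝ} (hlo : 0 < lo) (h : ∀ t ∈ spectrum ℝ S, lo ≤ t) (v : ι → ℝ) :
    lo * (v ⬝ᵥ (S⁻¹ *ᵥ v)) ≤ v ⬝ᵥ v := by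
  have hinv : v ⬝ᵥ (S⁻¹ *ᵥ v) ≤ lo⁻¹ * (v ⬝ᵥ v) := by
    refine hS.inv.isHermitian.dotProduct_mulVec_le_mul_dotProduct_self (fun t ht => ?_) v
    simpa using inv_anti₀ hlo (h _ (hS.mem_spectrum_inv_iff.mp ht))
  rwa [le_inv_mul_iff₀ hlo] at hinv

end Matrix

section Vadu

variable {ι : Type*} [Fintype ι] [DecidableEq ι] (B : Matrix ι ι ℝ) (d w : ι → ℝ)

noncomputable def vaduSqrtPreconditioner : Matrix ι ι ℝ :=
  Bᵀ * diagonal fun i => √(w i + (d i)⁻¹)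

noncomputable def vaduPreconditioned : Matrix ι ι ℝ :=
  (vaduSqrtPreconditioner B d w)⁻¹ * (diagonal w + Bᵀ * (diagonal d)⁻¹ * B) *
    (vaduSqrtPreconditioner B d w)⁻¹ᵀ

variable {B d w}

theorem isUnit_det_vaduSqrtPreconditioner (hB : IsUnit B.det) (hd : ∀ i, 0 < d i)
    (hw : ∀ i, 0 < w i) : IsUnit (vaduSqrtPreconditioner B d w).det := by
  rw [vaduSqrtPreconditioner, det_mul, det_transpose, det_diagonal]
  exact hB.mul (Finset.prod_pos fun i _ => Real.sqrt_pos.mpr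
    (add_pos (hw i) (inv_pos.mpr (hd i)))).ne'.isUnit

theorem vaduSqrtPreconditioner_transpose_mulVec_dotProduct_self (hd : ∀ i, 0 < d i)
    (hw : ∀ i, 0 < w i) (z : ι → ℝ) :
    ((vaduSqrtPreconditioner B d w)ᵀ *ᵥ z) ⬝ᵥ ((vaduSqrtPreconditioner B d w)ᵀ *ᵥ z) =
      ∑ i, (w i + (d i)⁻¹) * (B *ᵥ z) i ^ 2 := by
  rw [vaduSqrtPreconditioner, transpose_mul, diagonal_transpose, transpose_transpose,
    ← mulVec_mulVec, diagonal_mulVec_dotProduct_self]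
  refine Finset.sum_congr rfl fun i _ => ?_
  rw [Real.sq_sqrt (add_pos (hw i) (inv_pos.mpr (hd i))).le]

theorem dotProduct_transpose_mul_inv_diagonal_mul_mulVec (hd : ∀ i, 0 < d i) (hw : ∀ i, 0 < w i)
    (z : ι → ℝ) :
    z ⬝ᵥ ((Bᵀ * (diagonal d)⁻¹ * B) *ᵥ z) =
      ∑ i, (d i * w i + 1)⁻¹ * ((w i + (d i)⁻¹) * (B *ᵥ z) i ^ 2) := by
  have hdinv : (diagonal d)⁻¹ = diagonal d⁻¹ := inv_eq_left_inv <| by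
    rw [diagonal_mul_diagonal, ← diagonal_one]
    exact congrArg diagonal (funext fun i => inv_mul_cancel₀ (hd i).ne')
  rw [dotProduct_transpose_mul_mul_mulVec, hdinv, dotProduct_diagonal_mulVec]
  refine Finset.sum_congr rfl fun i _ => ?_
  have := (hd i).ne'
  have := (add_pos (mul_pos (hd i) (hw i)) one_pos).ne'
  rw [Pi.inv_apply]
  field_simp

theorem exists_dotProduct_vaduPreconditioned_mulVec_eq (hB : IsUnit B.det) (hd : ∀ i, 0 < d i)
    (hw : ∀ i, 0 < w i) (x : ι → ℝ) :
    ∃ z, x ⬝ᵥ (vaduPreconditioned B d w *ᵥ x) =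
        ∑ i, w i * z i ^ 2 + z ⬝ᵥ ((Bᵀ * (diagonal d)⁻¹ * B) *ᵥ z) ∧
      x ⬝ᵥ x = ∑ i, (w i + (d i)⁻¹) * (B *ᵥ z) i ^ 2 := by
  have hP := isUnit_det_vaduSqrtPreconditioner hB hd hw
  obtain ⟨z, rfl⟩ : ∃ z, (vaduSqrtPreconditioner B d w)ᵀ *ᵥ z = x :=
    ⟨(vaduSqrtPreconditioner B d w)⁻¹ᵀ *ᵥ x, by
      rw [mulVec_mulVec, ← transpose_mul, nonsing_inv_mul _ hP, transpose_one, one_mulVec]⟩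
  refine ⟨z, ?_, vaduSqrtPreconditioner_transpose_mulVec_dotProduct_self hd hw z⟩
  rw [vaduPreconditioned, dotProduct_inv_mul_mul_inv_transpose_mulVec hP, add_mulVec,
    dotProduct_add, dotProduct_diagonal_mulVec]

theorem dotProduct_vaduPreconditioned_mulVec_le (hB : IsUnit B.det) (hd : ∀ i, 0 < d i)
    (hw : ∀ i, 0 < w i) {c : ℝ} (hc : 0 ≤ c)
    (hSinv : ∀ z, z ⬝ᵥ z ≤ c * (z ⬝ᵥ ((Bᵀ * (diagonal d)⁻¹ * B) *ᵥ z))) (x : ι → ℝ) :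
    x ⬝ᵥ (vaduPreconditioned B d w *ᵥ x) ≤
      ((c * ⨆ i, w i) + 1) * (⨆ i, (d i * w i + 1)⁻¹) * (x ⬝ᵥ x) := by
  obtain ⟨z, hMx, hx⟩ := exists_dotProduct_vaduPreconditioned_mulVec_eq hB hd hw x
  have hWz : ∑ i, w i * z i ^ 2 ≤ (⨆ i, w i) * (c * z ⬝ᵥ ((Bᵀ * (diagonal d)⁻¹ * B) *ᵥ z)) := by
    refine (sum_mul_le_ciSup_mul_sum w _ fun i => sq_nonneg (z i)).trans ?_
    refine mul_le_mul_of_nonneg_left ?_ (Real.iSup_nonneg fun i => (hw i).le)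
    simpa [dotProduct, sq] using hSinv z
  have hq : z ⬝ᵥ ((Bᵀ * (diagonal d)⁻¹ * B) *ᵥ z) ≤ (⨆ i, (d i * w i + 1)⁻¹) * (x ⬝ᵥ x) := by
    rw [hx, dotProduct_transpose_mul_inv_diagonal_mul_mulVec hd hw]
    exact sum_mul_le_ciSup_mul_sum _ _ fun i =>
      mul_nonneg (add_pos (hw i) (inv_pos.mpr (hd i))).le (sq_nonneg _)
  have hcw : 0 ≤ (c * ⨆ i, w i) + 1 := by
    linarith [mul_nonneg hc (Real.iSup_nonneg fun i => (hw i).le)]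
  calc _ ≤ ((c * ⨆ i, w i) + 1) * z ⬝ᵥ ((Bᵀ * (diagonal d)⁻¹ * B) *ᵥ z) := by linarith
    _ ≤ _ := (mul_le_mul_of_nonneg_left hq hcw).trans_eq (mul_assoc _ _ _).symm

theorem le_dotProduct_vaduPreconditioned_mulVec (hB : IsUnit B.det) (hd : ∀ i, 0 < d i)
    (hw : ∀ i, 0 < w i) {c : ℝ} (hc : 0 ≤ c)
    (hSinv : ∀ z, c * (z ⬝ᵥ ((Bᵀ * (diagonal d)⁻¹ * B) *ᵥ z)) ≤ z ⬝ᵥ z) (x : ι → ℝ) :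
    ((c * ⨅ i, w i) + 1) * (⨅ i, (d i * w i + 1)⁻¹) * (x ⬝ᵥ x) ≤
      x ⬝ᵥ (vaduPreconditioned B d w *ᵥ x) := by
  obtain ⟨z, hMx, hx⟩ := exists_dotProduct_vaduPreconditioned_mulVec_eq hB hd hw x
  have hWz : (⨅ i, w i) * (c * z ⬝ᵥ ((Bᵀ * (diagonal d)⁻¹ * B) *ᵥ z)) ≤ ∑ i, w i * z i ^ 2 := by
    refine le_trans ?_ (ciInf_mul_sum_le_sum_mul w _ fun i => sq_nonneg (z i))
    refine mul_le_mul_of_nonneg_left ?_ (Real.iInf_nonneg fun i => (hw i).le)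
    simpa [dotProduct, sq] using hSinv z
  have hq : (⨅ i, (d i * w i + 1)⁻¹) * (x ⬝ᵥ x) ≤ z ⬝ᵥ ((Bᵀ * (diagonal d)⁻¹ * B) *ᵥ z) := by
    rw [hx, dotProduct_transpose_mul_inv_diagonal_mul_mulVec hd hw]
    exact ciInf_mul_sum_le_sum_mul _ _ fun i =>
      mul_nonneg (add_pos (hw i) (inv_pos.mpr (hd i))).le (sq_nonneg _)
  have hcw : 0 ≤ (c * ⨅ i, w i) + 1 := by
    linarith [mul_nonneg hc (Real.iInf_nonneg fun i => (hw i).le)]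
  calc _ = ((c * ⨅ i, w i) + 1) * ((⨅ i, (d i * w i + 1)⁻¹) * (x ⬝ᵥ x)) := mul_assoc _ _ _
    _ ≤ ((c * ⨅ i, w i) + 1) * z ⬝ᵥ ((Bᵀ * (diagonal d)⁻¹ * B) *ᵥ z) :=
      mul_le_mul_of_nonneg_left hq hcw
    _ ≤ _ := by linarith

theorem le_of_mem_spectrum_vaduPreconditioned (hB : IsUnit B.det) (hd : ∀ i, 0 < d i)
    (hw : ∀ i, 0 < w i) {hi : ℝ} (hhi : 0 < hi)
    (hSt : ∀ s ∈ spectrum ℝ (B⁻¹ * diagonal d * B⁻¹ᵀ), s ≤ hi) {t : ℝ}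
    (ht : t ∈ spectrum ℝ (vaduPreconditioned B d w)) :
    t ≤ ((hi * ⨆ i, w i) + 1) * ⨆ i, (d i * w i + 1)⁻¹ := by
  refine le_of_mem_spectrum_of_forall_dotProduct_mulVec_le
    (dotProduct_vaduPreconditioned_mulVec_le hB hd hw hhi.le fun z => ?_) ht
  simpa [inv_mul_mul_inv_transpose_inv hB] using
    ((PosDef.diagonal hd).inv_mul_mul_inv_transpose hB).dotProduct_self_le_mul_dotProduct_inv_mulVec
      hhi hSt z

theorem ge_of_mem_spectrum_vaduPreconditioned (hB : IsUnit B.det) (hd : ∀ i, 0 < d i)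
    (hw : ∀ i, 0 < w i) {lo : ℝ} (hlo : 0 < lo)
    (hSt : ∀ s ∈ spectrum ℝ (B⁻¹ * diagonal d * B⁻¹ᵀ), lo ≤ s) {t : ℝ}
    (ht : t ∈ spectrum ℝ (vaduPreconditioned B d w)) :
    ((lo * ⨅ i, w i) + 1) * (⨅ i, (d i * w i + 1)⁻¹) ≤ t := by
  refine le_of_mem_spectrum_of_forall_le_dotProduct_mulVec
    (le_dotProduct_vaduPreconditioned_mulVec hB hd hw hlo.le fun z => ?_) ht
  simpa [inv_mul_mul_inv_transpose_inv hB] using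
    ((PosDef.diagonal hd).inv_mul_mul_inv_transpose hB).mul_dotProduct_inv_mulVec_le_dotProduct_self
      hlo hSt z

end Vadu

theorem vadu_condition_number_bound_general {n : ℕ}
    (B D W Sinv St Phalf M : Matrix (Fin (n + 1)) (Fin (n + 1)) ℝ)
    (d w : Fin (n + 1) → ℝ) (hd : ∀ i, 0 < d i) (hw : ∀ i, 0 < w i)
    (hBinv : IsUnit B.det)
    (hD : D = Matrix.diagonal d) (hW : W = Matrix.diagonal w)
    (hSt : St = B⁻¹ * D * (B⁻¹)ᵀ)
    (hSinv : Sinv = Bᵀ * D⁻¹ * B)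
    (hP : Phalf = Bᵀ * Matrix.diagonal (fun i => Real.sqrt (w i + (d i)⁻¹)))
    (hM : M = Phalf⁻¹ * (W + Sinv) * (Phalf⁻¹)ᵀ)
    (μ ν : Fin (n + 1) → ℝ) (hνa : Antitone ν)
    (hμ : M.charpoly = ∏ i : Fin (n + 1), (X - C (μ i)))
    (hν : St.charpoly = ∏ i : Fin (n + 1), (X - C (ν i))) :
    μ 0 / μ (Fin.last n) ≤
      ((ν 0 * (⨆ i, w i) + 1) * (⨆ i, (d i * w i + 1)⁻¹)) /
        ((ν (Fin.last n) * (⨅ i, w i) + 1) * (⨅ i, (d i * w i + 1)⁻¹)) := by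
  subst hD hW hSt hSinv hP hM
  have hμ_mem (i) := (mem_spectrum_iff_of_charpoly_eq_prod hμ).mpr ⟨i, rfl⟩
  have hν_bounds (t) (ht : t ∈ spectrum ℝ (B⁻¹ * diagonal d * B⁻¹ᵀ)) :
      ν (Fin.last n) ≤ t ∧ t ≤ ν 0 := by
    obtain ⟨i, rfl⟩ := (mem_spectrum_iff_of_charpoly_eq_prod hν).mp ht
    exact ⟨hνa (Fin.le_last i), hνa (Fin.zero_le i)⟩
  have hνn : 0 < ν (Fin.last n) :=
    ((PosDef.diagonal hd).inv_mul_mul_inv_transpose hBinv).isStrictlyPositive.spectrum_pos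
      ((mem_spectrum_iff_of_charpoly_eq_prod hν).mpr ⟨_, rfl⟩)
  have hν0 : 0 < ν 0 := hνn.trans_le (hνa (Fin.zero_le _))
  have hμ0 := le_of_mem_spectrum_vaduPreconditioned hBinv hd hw hν0
    (fun t ht => (hν_bounds t ht).2) (hμ_mem 0)
  have hμn := ge_of_mem_spectrum_vaduPreconditioned hBinv hd hw hνn
    (fun t ht => (hν_bounds t ht).1) (hμ_mem (Fin.last n))
  have hinv_pos (i) : 0 < (d i * w i + 1)⁻¹ := inv_pos.mpr (by linarith [mul_pos (hd i) (hw i)])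
  refine div_le_div₀ (mul_nonneg ?_ (Real.iSup_nonneg fun i => (hinv_pos i).le)) hμ0
    (mul_pos ?_ (Finite.ciInf_pos hinv_pos)) hμn
  · linarith [mul_nonneg hν0.le (Real.iSup_nonneg fun i => (hw i).le)]
  · linarith [mul_nonneg hνn.le (Real.iInf_nonneg fun i => (hw i).le)]

/-- Condition number bound for the VADU-preconditioned matrix
`M = P^{-1/2}(W + Σ̃⁻¹)P^{-T/2}` with `P½ = Bᵀ(W + D⁻¹)^{1/2}`:
`λ₁(M)/λₙ(M) ≤ ((λ₁(Σ̃) maxᵢ Wᵢᵢ + 1) maxᵢ (DᵢWᵢᵢ+1)⁻¹)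
             / ((λₙ(Σ̃) minᵢ Wᵢᵢ + 1) minᵢ (DᵢWᵢᵢ+1)⁻¹)`.
`μ` and `ν` are the decreasingly ordered eigenvalue sequences of `M` and `Σ̃`,
so `λ₁ = μ 0` and `λₙ = μ (Fin.last n)`. -/
theorem vadu_condition_number_bound {n : ℕ}
    (B D W Sinv St Phalf M : Matrix (Fin (n + 1)) (Fin (n + 1)) ℝ)
    (d w : Fin (n + 1) → ℝ) (hd : ∀ i, 0 < d i) (hw : ∀ i, 0 < w i)
    (hBlow : ∀ i j : Fin (n + 1), i < j → B i j = 0) (hBdiag : ∀ i, B i i = 1)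
    (hBinv : IsUnit B.det)
    (hD : D = Matrix.diagonal d) (hW : W = Matrix.diagonal w)
    (hSt : St = B⁻¹ * D * (B⁻¹)ᵀ)
    (hSinv : Sinv = Bᵀ * D⁻¹ * B)
    (hP : Phalf = Bᵀ * Matrix.diagonal (fun i => Real.sqrt (w i + (d i)⁻¹)))
    (hM : M = Phalf⁻¹ * (W + Sinv) * (Phalf⁻¹)ᵀ)
    (μ ν : Fin (n + 1) → ℝ) (hμa : Antitone μ) (hνa : Antitone ν)
    (hμ : M.charpoly = ∏ i : Fin (n + 1), (X - C (μ i)))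
    (hν : St.charpoly = ∏ i : Fin (n + 1), (X - C (ν i))) :
    μ 0 / μ (Fin.last n) ≤
      ((ν 0 * (⨆ i, w i) + 1) * (⨆ i, (d i * w i + 1)⁻¹)) /
        ((ν (Fin.last n) * (⨅ i, w i) + 1) * (⨅ i, (d i * w i + 1)⁻¹)) :=
  vadu_condition_number_bound_general B D W Sinv St Phalf M d w hd hw hBinv hD hW hSt hSinv hP hM μ
    ν hνa hμ hν
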